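/- Let A ⊆ ℕ have positive upper Banach density, and let (α_n)_{n∈ℤ} be non-negative reals with Σ_{n∈ℤ} α_n = +∞ such that for some C > 0 and N ∈ ℤ ∪ {+∞}, α_n ≥ C·α_{n−1} for all n < N and α_n = 0 for all n ≥ N. For n ∈ A define β_n = Σ_{m∈A} α_{m−n}. Then the family (β_n)_{n∈A} is unbounded. -/

import Mathlib

open Filter

noncomputable def upperCount (A : Set ℕ) (s : ℕ) : ℝ :=
  limsup (fun k : ℕ => ((A ∩ Set.Icc (k + 1) (k + s)).ncard : ℝ)) atTop

noncomputable def upperBanachDensity (A : Set ℕ) : ℝ :=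
  limsup (fun s : ℕ => upperCount A s / s) atTop

/-!
Fix `0 < γ < Bd̄(A)`, windows `(a_j, a_j + L_j]` of growing length on which `A` has more than
`γ L_j` elements, and an ultrafilter `U` on the window index. Let `F` be the set of `d` such that
`A ∩ (A - d)` has more than `γ² L_j / 2` elements in `U`-almost every window. `F` is syndetic
(Khintchine's argument): otherwise there are `r ≥ 4 / γ²` shifts whose pairwise differences avoid
`F`, and Cauchy–Schwarz applied to `n ↦ #{s | n + s ∈ A}` on a window contradicts this.
The growth condition dominates every `α_x` by some `α_k` with `|k| ∈ F` and `0 ≤ k - x ≤ M`,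
so `∑_{|k| ∈ F} α_k = ∞`. If all `β_n ≤ K`, summing `β_n` over `A` in a long common window in
which `A ∩ (A - |k|)` is dense for all `k` in a finite `Φ` counts each `α_k`, `k ∈ Φ`, at least
`γ² L / 2` times, whence `∑_Φ α_k ≤ 4 K / γ²`, contradicting the divergence.
-/

open Finset
open scoped ENNReal

open scoped Classical in
noncomputable def window (B : Set ℕ) (a L : ℕ) : Finset ℕ := {n ∈ Ioc a (a + L) | n ∈ B}

/-- The paper's `A ∩ (A - d)`. -/
def shiftInter (A : Set ℕ) (d : ℕ) : Set ℕ := {n | n ∈ A ∧ n + d ∈ A}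

/-- The paper's `β_n`. -/
noncomputable def correlationSum (A : Set ℕ) (α : ℤ → ℝ) (n : ℕ) : ℝ≥0∞ :=
  ∑' m : A, ENNReal.ofReal (α ((m : ℕ) - (n : ℤ)))

def IsSyndetic (F : Set ℕ) : Prop := ∃ M, ∀ m, ∃ x ∈ F, m < x ∧ x ≤ m + M

lemma mem_window {B : Set ℕ} {a L n : ℕ} : n ∈ window B a L ↔ a < n ∧ n ≤ a + L ∧ n ∈ B := by
  simp [window, and_assoc]

lemma card_window_le (B : Set ℕ) (a L : ℕ) : #(window B a L) ≤ L := by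
  classical
  exact (card_filter_le _ _).trans (by simp)

lemma ncard_inter_Icc_eq_card_window (B : Set ℕ) (k s : ℕ) :
    (B ∩ Set.Icc (k + 1) (k + s)).ncard = #(window B k s) := by
  rw [Set.Icc_add_one_left_eq_Ioc, ← Set.ncard_coe_finset]
  congr 1
  ext n
  simp only [Set.mem_inter_iff, Set.mem_Ioc, mem_coe, mem_window]
  tauto

lemma upperCount_nonneg (A : Set ℕ) (s : ℕ) : 0 ≤ upperCount A s := by
  refine le_limsup_of_frequently_le (Frequently.of_forall fun k => by positivity)
    (isBoundedUnder_of ⟨s, fun k => ?_⟩)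
  rw [ncard_inter_Icc_eq_card_window]
  exact_mod_cast card_window_le A k s

lemma exists_lt_card_window {A : Set ℕ} {γ : ℝ} (hγ : γ < upperBanachDensity A) (j : ℕ) :
    ∃ a L, j ≤ a ∧ j ≤ L ∧ γ * L < #(window A a L) := by
  have hs : ∃ᶠ s in atTop, γ < upperCount A s / s :=
    frequently_lt_of_lt_limsup (isBoundedUnder_of ⟨0, fun s => by
      have := upperCount_nonneg A s; positivity⟩).isCoboundedUnder_le hγ
  obtain ⟨s, hjs, hγs⟩ := frequently_atTop.1 hs (max j 1)
  have hs0 : (0 : ℝ) < s := by exact_mod_cast (le_of_max_le_right hjs)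
  have hk : ∃ᶠ k in atTop, γ * s < ((A ∩ Set.Icc (k + 1) (k + s)).ncard : ℝ) :=
    frequently_lt_of_lt_limsup (isBoundedUnder_of ⟨0, fun k => by positivity⟩).isCoboundedUnder_le
      ((lt_div_iff₀ hs0).1 hγs)
  obtain ⟨a, hja, ha⟩ := frequently_atTop.1 hk j
  exact ⟨a, s, hja, le_of_max_le_left hjs, by rwa [ncard_inter_Icc_eq_card_window] at ha⟩

lemma card_filter_add_mem_eq {X I : Finset ℕ} {s : ℕ} (hsX : ∀ x ∈ X, s ≤ x)
    (hXI : ∀ x ∈ X, x - s ∈ I) : #{n ∈ I | n + s ∈ X} = #X :=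
  card_nbij' (· + s) (· - s) (fun n hn => (mem_filter.1 hn).2)
    (fun x hx => mem_filter.2 ⟨hXI x hx, by rwa [Nat.sub_add_cancel (hsX x hx)]⟩)
    (fun n _ => by simp) (fun x hx => Nat.sub_add_cancel (hsX x hx))

lemma card_filter_add_mem_and_add_mem_le {X I : Finset ℕ} {s s' : ℕ} (h : s ≤ s') :
    #{n ∈ I | n + s ∈ X ∧ n + s' ∈ X} ≤ #{x ∈ X | x + (s' - s) ∈ X} := by
  refine card_le_card_of_injOn (· + s) (fun n hn => ?_) (fun _ _ _ _ => Nat.add_right_cancel)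
  rw [mem_coe, mem_filter] at hn ⊢
  exact ⟨hn.2.1, by rw [add_assoc, Nat.add_sub_cancel' h]; exact hn.2.2⟩

theorem sq_card_mul_card_le {X S I : Finset ℕ} (hSX : ∀ s ∈ S, ∀ x ∈ X, s ≤ x)
    (hXI : ∀ s ∈ S, ∀ x ∈ X, x - s ∈ I) {m : ℝ} (hm0 : 0 ≤ m)
    (hm : ∀ s ∈ S, ∀ s' ∈ S, s < s' → (#{x ∈ X | x + (s' - s) ∈ X} : ℝ) ≤ m) :
    ((#S : ℝ) * #X) ^ 2 ≤ #I * (#S * #X + #S ^ 2 * m) := by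
  set f : ℕ → ℝ := fun n => ∑ s ∈ S, if n + s ∈ X then 1 else 0
  have hsum : ∑ n ∈ I, f n = #S * #X := by
    rw [sum_comm]
    simp only [sum_boole]
    rw [sum_congr rfl fun s hs => by rw [card_filter_add_mem_eq (hSX s hs) (hXI s hs)]]
    simp
  have hpair : ∀ s ∈ S, ∀ s' ∈ S,
      (#{n ∈ I | n + s ∈ X ∧ n + s' ∈ X} : ℝ) ≤ (if s = s' then (#X : ℝ) else 0) + m := by
    intro s hs s' hs'
    rcases lt_trichotomy s s' with h | rfl | h
    · rw [if_neg h.ne, zero_add]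
      exact le_trans (by exact_mod_cast card_filter_add_mem_and_add_mem_le h.le) (hm s hs s' hs' h)
    · simp only [and_self, if_true, card_filter_add_mem_eq (hSX s hs) (hXI s hs)]
      linarith
    · rw [if_neg h.ne', zero_add]
      simp only [and_comm (a := _ + s ∈ X)]
      exact le_trans (by exact_mod_cast card_filter_add_mem_and_add_mem_le h.le) (hm s' hs' s hs h)
  have hsq : ∑ n ∈ I, f n ^ 2 ≤ #S * #X + #S ^ 2 * m := by
    calc ∑ n ∈ I, f n ^ 2
        = ∑ s ∈ S, ∑ s' ∈ S, (#{n ∈ I | n + s ∈ X ∧ n + s' ∈ X} : ℝ) := by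
          simp only [f, sq, sum_mul_sum]
          rw [sum_comm]
          refine sum_congr rfl fun s _ => ?_
          rw [sum_comm]
          simp only [ite_zero_mul_ite_zero, mul_one, sum_boole]
      _ ≤ ∑ s ∈ S, ∑ s' ∈ S, ((if s = s' then (#X : ℝ) else 0) + m) :=
          sum_le_sum fun s hs => sum_le_sum fun s' hs' => hpair s hs s' hs'
      _ = #S * #X + #S ^ 2 * m := by
          simp only [sum_add_distrib, sum_ite_eq, sum_const, nsmul_eq_mul]
          rw [sum_ite_mem, inter_self, sum_const, nsmul_eq_mul]
          ring
  calc ((#S : ℝ) * #X) ^ 2 = (∑ n ∈ I, f n) ^ 2 := by rw [hsum]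
    _ ≤ #I * ∑ n ∈ I, f n ^ 2 := sq_sum_le_card_mul_sum_sq
    _ ≤ #I * (#S * #X + #S ^ 2 * m) := by gcongr

lemma card_filter_add_mem_window_le (A : Set ℕ) (a L d : ℕ) :
    #{x ∈ window A a L | x + d ∈ window A a L} ≤ #(window (shiftInter A d) a L) := by
  refine card_le_card fun x hx => ?_
  simp only [mem_filter, mem_window] at hx
  exact mem_window.2 ⟨hx.1.1, hx.1.2.1, hx.1.2.2, hx.2.2.2⟩

theorem exists_lt_card_window_shiftInter {A : Set ℕ} {γ : ℝ} (hγ : 0 < γ) {S : Finset ℕ}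
    (hS : 4 ≤ #S * γ ^ 2) {a L R : ℕ} (hSR : ∀ s ∈ S, s ≤ R) (hRa : R ≤ a) (hRL : 3 * R ≤ L)
    (hA : γ * L < #(window A a L)) :
    ∃ s ∈ S, ∃ s' ∈ S, s < s' ∧ γ ^ 2 / 2 * L < #(window (shiftInter A (s' - s)) a L) := by
  by_contra! hsparse
  set X := window A a L
  have hXa : ∀ x ∈ X, a < x ∧ x ≤ a + L := fun x hx => (mem_window.1 hx).imp_right And.left
  have hCS := sq_card_mul_card_le (X := X) (S := S) (I := Ioc (a - R) (a + L))
    (fun s hs x hx => by linarith [hSR s hs, (hXa x hx).1])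
    (fun s hs x hx => by have := hSR s hs; have := hXa x hx; simp only [mem_Ioc]; omega)
    (by positivity) fun s hs s' hs' h =>
      (Nat.cast_le.2 (card_filter_add_mem_window_le A a L _)).trans (hsparse s hs s' hs' h)
  have hI : (#(Ioc (a - R) (a + L)) : ℝ) ≤ L + R := by
    rw [Nat.card_Ioc]; exact_mod_cast (by omega : a + L - (a - R) ≤ L + R)
  set r : ℝ := (#S : ℝ)
  set c : ℝ := (#X : ℝ)
  have hcL : c ≤ L := Nat.cast_le.2 (card_window_le A a L)
  have hL : 0 < (L : ℝ) := by nlinarith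
  have hr : 0 < r := by nlinarith
  -- Cauchy–Schwarz, divided by `r L`, reads `r γ² L < (L + R) (1 + r γ² / 2)`.
  have key : r * γ ^ 2 * L < (L + R) * (1 + r * γ ^ 2 / 2) := by
    have h1 : (r * c) ^ 2 ≤ (L + R) * (r * c + r ^ 2 * (γ ^ 2 / 2 * L)) :=
      hCS.trans (by gcongr)
    have h2 : r * (γ * L) ^ 2 < r * c ^ 2 := by gcongr
    have h3 : r * c ^ 2 ≤ (L + R) * (c + r * (γ ^ 2 / 2 * L)) := by
      refine le_of_mul_le_mul_left ?_ hr
      linear_combination h1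
    have h4 : (L + R) * (c + r * (γ ^ 2 / 2 * L)) ≤ L * ((L + R) * (1 + r * γ ^ 2 / 2)) := by
      nlinarith
    refine lt_of_mul_lt_mul_left ?_ hL.le
    linarith
  have hR : (3 * R : ℝ) ≤ L := by exact_mod_cast hRL
  nlinarith

lemma exists_card_eq_forall_sub_notMem {F : Set ℕ} (hF : ¬ IsSyndetic F) (r : ℕ) :
    ∃ S : Finset ℕ, #S = r ∧ ∀ s ∈ S, ∀ s' ∈ S, s < s' → s' - s ∉ F := by
  induction r with
  | zero => exact ⟨∅, rfl, by simp⟩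
  | succ r ih =>
    obtain ⟨S, hcard, hS⟩ := ih
    set R := S.sup id
    have hSR : ∀ s ∈ S, s ≤ R := fun s hs => le_sup (f := id) hs
    obtain ⟨m, hm⟩ : ∃ m, ∀ x ∈ F, m < x → m + (R + 1) < x := by
      simp only [IsSyndetic, not_exists, not_forall, not_and, not_le] at hF
      exact hF (R + 1)
    -- `t - s` lies in the gap `(m, m + R + 1]` of `F` for every `s ∈ S`.
    set t := m + (R + 1) with ht
    have htS : t ∉ S := fun htS => by have := hSR t htS; omega
    refine ⟨insert t S, by rw [card_insert_of_notMem htS, hcard], fun s hs s' hs' hlt hmem => ?_⟩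
    rcases mem_insert.1 hs with rfl | hs <;> rcases mem_insert.1 hs' with rfl | hs'
    · exact lt_irrefl _ hlt
    · have := hSR s' hs'; omega
    · have := hSR s hs
      have := hm _ hmem (by omega)
      omega
    · exact hS s hs s' hs' hlt hmem

theorem isSyndetic_setOf_eventually_lt_card_window {A : Set ℕ} {γ : ℝ} (hγ : 0 < γ)
    {U : Ultrafilter ℕ} {a L : ℕ → ℕ} (ha : Tendsto a U atTop) (hL : Tendsto L U atTop)
    (hA : ∀ᶠ j in U, γ * L j < #(window A (a j) (L j))) :
    IsSyndetic {d | ∀ᶠ j in U, γ ^ 2 / 2 * L j < #(window (shiftInter A d) (a j) (L j))} := by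
  by_contra hF
  obtain ⟨S, hS, hSF⟩ := exists_card_eq_forall_sub_notMem hF ⌈4 / γ ^ 2⌉₊
  have hSγ : 4 ≤ #S * γ ^ 2 := by
    rw [hS, ← div_le_iff₀ (by positivity)]
    exact Nat.le_ceil _
  have hsparse : ∀ᶠ j in U, ∀ s ∈ S, ∀ s' ∈ S, s < s' →
      ¬ γ ^ 2 / 2 * L j < #(window (shiftInter A (s' - s)) (a j) (L j)) := by
    refine (eventually_all_finset S).2 fun s hs => (eventually_all_finset S).2 fun s' hs' => ?_
    by_cases h : s < s'
    · exact (Ultrafilter.eventually_not.2 (hSF s hs s' hs' h)).mono fun _ hj _ => hj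
    · exact Eventually.of_forall fun _ h' => absurd h' h
  obtain ⟨j, hja, hjL, hjA, hj⟩ := ((ha.eventually_ge_atTop (S.sup id)).and
    ((hL.eventually_ge_atTop (3 * S.sup id)).and (hA.and hsparse))).exists
  obtain ⟨s, hs, s', hs', hlt, hdense⟩ :=
    exists_lt_card_window_shiftInter hγ hSγ (fun s hs => le_sup (f := id) hs) hja hjL hjA
  exact hj s hs s' hs' hlt hdense

lemma IsSyndetic.exists_natAbs_add_mem {F : Set ℕ} (hF : IsSyndetic F) :
    ∃ M : ℕ, ∀ x : ℤ, ∃ t ≤ M, (x + t).natAbs ∈ F := by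
  obtain ⟨M, hM⟩ := hF
  refine ⟨2 * M, fun x => ?_⟩
  rcases le_or_gt 0 x with hx | hx
  · obtain ⟨f, hf, hxf, hfM⟩ := hM x.toNat
    refine ⟨f - x.toNat, by omega, ?_⟩
    rwa [show (x + (f - x.toNat : ℕ)).natAbs = f by omega]
  rcases le_or_gt (M : ℤ) (-x) with hxM | hxM
  · obtain ⟨f, hf, hxf, hfM⟩ := hM (-x - M).toNat
    refine ⟨(-x - f).toNat, by omega, ?_⟩
    rwa [show (x + (-x - f).toNat).natAbs = f by omega]
  · obtain ⟨f, hf, hxf, hfM⟩ := hM 0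
    refine ⟨(f - x).toNat, by omega, ?_⟩
    rwa [show (x + (f - x).toNat).natAbs = f by omega]

lemma pow_mul_le_of_growth {α : ℤ → ℝ} {C : ℝ} (hC : 0 ≤ C) {N : WithTop ℤ}
    (hgrow : ∀ n : ℤ, (n : WithTop ℤ) < N → C * α (n - 1) ≤ α n) (x : ℤ) :
    ∀ t : ℕ, ((x + t : ℤ) : WithTop ℤ) < N → C ^ t * α x ≤ α (x + t) := by
  intro t
  induction t with
  | zero => simp
  | succ t ih =>
    intro hxt
    have hle : ((x + t : ℤ) : WithTop ℤ) ≤ ((x + (t + 1 : ℕ) : ℤ) : WithTop ℤ) :=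
      WithTop.coe_le_coe.2 (by omega)
    calc C ^ (t + 1) * α x = C * (C ^ t * α x) := by ring
      _ ≤ C * α (x + t) := mul_le_mul_of_nonneg_left (ih (hle.trans_lt hxt)) hC
      _ ≤ α (x + (t + 1 : ℕ)) := by
          have h := hgrow _ hxt
          rwa [show x + ((t + 1 : ℕ) : ℤ) - 1 = x + t by push_cast; ring] at h

lemma ofReal_mul_le_of_growth {α : ℤ → ℝ} {C : ℝ} (hC : 0 < C) {N : WithTop ℤ}
    (hgrow : ∀ n : ℤ, (n : WithTop ℤ) < N → C * α (n - 1) ≤ α n) {x : ℤ} {t M : ℕ}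
    (htM : t ≤ M) (hxt : ((x + t : ℤ) : WithTop ℤ) < N) :
    ENNReal.ofReal (min C 1 ^ M) * ENNReal.ofReal (α x) ≤ ENNReal.ofReal (α (x + t)) := by
  rw [← ENNReal.ofReal_mul (by positivity), ENNReal.ofReal_le_ofReal_iff']
  rcases le_or_gt (α x) 0 with hx | hx
  · exact Or.inr (mul_nonpos_of_nonneg_of_nonpos (by positivity) hx)
  refine Or.inl (le_trans ?_ (pow_mul_le_of_growth hC.le hgrow x t hxt))
  gcongr
  calc min C 1 ^ M ≤ min C 1 ^ t := pow_le_pow_of_le_one (by positivity) (min_le_right _ _) htM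
    _ ≤ C ^ t := by gcongr; exact min_le_left _ _

lemma WithTop.exists_finset_forall_le_or_add_lt (N : WithTop ℤ) (M : ℕ) :
    ∃ E : Finset ℤ, ∀ x ∉ E, N ≤ x ∨ ((x + M : ℤ) : WithTop ℤ) < N := by
  cases N with
  | top => exact ⟨∅, fun x _ => Or.inr (WithTop.coe_lt_top _)⟩
  | coe z =>
    refine ⟨Ico (z - M) z, fun x hx => ?_⟩
    simp only [mem_Ico, not_and_or, not_le, not_lt] at hx
    simp only [WithTop.coe_le_coe, WithTop.coe_lt_coe]
    omega

lemma ENNReal.tsum_sum_add_natCast (f : ℤ → ℝ≥0∞) (s : Finset ℕ) :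
    ∑' x, ∑ t ∈ s, f (x + t) = #s * ∑' x, f x := by
  rw [Summable.tsum_finsetSum fun _ _ => ENNReal.summable]
  have h (t : ℕ) : ∑' x, f (x + t) = ∑' x, f x := (Equiv.addRight (t : ℤ)).tsum_eq f
  rw [sum_congr rfl fun t _ => h t, sum_const, nsmul_eq_mul]

theorem tsum_ofReal_natAbs_mem_eq_top {α : ℤ → ℝ} (hdiv : ∑' n, ENNReal.ofReal (α n) = ⊤)
    {C : ℝ} (hC : 0 < C) {N : WithTop ℤ}
    (hgrow : ∀ n : ℤ, (n : WithTop ℤ) < N → C * α (n - 1) ≤ α n)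
    (hzero : ∀ n : ℤ, N ≤ (n : WithTop ℤ) → α n = 0) {F : Set ℕ} (hF : IsSyndetic F) :
    ∑' k : {k : ℤ | k.natAbs ∈ F}, ENNReal.ofReal (α k) = ⊤ := by
  obtain ⟨M, hM⟩ := hF.exists_natAbs_add_mem
  obtain ⟨E, hE⟩ := WithTop.exists_finset_forall_le_or_add_lt N M
  set G := {k : ℤ | k.natAbs ∈ F}
  set f : ℤ → ℝ≥0∞ := fun n => ENNReal.ofReal (α n)
  set κ := ENNReal.ofReal (min C 1 ^ M)
  -- Off the finite set `E`, each `κ α x` is dominated by some `α (x + t)` with `x + t ∈ G`.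
  have hpt : ∀ x, κ * f x ≤
      ∑ t ∈ range (M + 1), G.indicator f (x + t) + (E : Set ℤ).indicator (κ * f ·) x := by
    intro x
    by_cases hxE : x ∈ E
    · rw [Set.indicator_of_mem (mem_coe.2 hxE)]
      exact le_add_self
    rcases hE x hxE with hNx | hxN
    · simp [f, hzero x hNx]
    obtain ⟨t, htM, ht⟩ := hM x
    have hxt : ((x + t : ℤ) : WithTop ℤ) < N :=
      lt_of_le_of_lt (WithTop.coe_le_coe.2 (by omega)) hxN
    calc κ * f x ≤ G.indicator f (x + t) := by
          rw [Set.indicator_of_mem (show x + t ∈ G from ht)]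
          exact ofReal_mul_le_of_growth hC hgrow htM hxt
      _ ≤ ∑ t ∈ range (M + 1), G.indicator f (x + t) :=
          single_le_sum (f := fun t : ℕ => G.indicator f (x + t)) (fun _ _ => zero_le)
            (mem_range.2 (by omega))
      _ ≤ _ := le_self_add
  have hE_ne_top : ∑' x, (E : Set ℤ).indicator (κ * f ·) x ≠ ⊤ := by
    rw [tsum_eq_sum fun x hx => Set.indicator_of_notMem (mt mem_coe.1 hx) _]
    exact (ENNReal.sum_lt_top.2 fun x _ => (Set.indicator_le_self _ _ x).trans_lt
      (show κ * f x < ⊤ from ENNReal.mul_lt_top ENNReal.ofReal_lt_top ENNReal.ofReal_lt_top)).ne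
  have htop : ∑' x, κ * f x = ⊤ := by
    rw [ENNReal.tsum_mul_left, hdiv, ENNReal.mul_top (by simp [κ]; positivity)]
  have hle : ⊤ ≤ (M + 1) * ∑' k : G, f k + ∑' x, (E : Set ℤ).indicator (κ * f ·) x :=
    calc ⊤ = ∑' x, κ * f x := htop.symm
      _ ≤ _ := ENNReal.tsum_le_tsum hpt
      _ = _ := by
        rw [ENNReal.tsum_add, ENNReal.tsum_sum_add_natCast, card_range, _root_.tsum_subtype]
        push_cast; rfl
  by_contra hG
  exact ENNReal.add_ne_top.2 ⟨ENNReal.mul_ne_top (by simp) hG, hE_ne_top⟩ (top_unique hle)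

lemma ENNReal.exists_finset_lt_sum_of_tsum_subtype_eq_top {ι : Type*} {s : Set ι}
    {f : ι → ℝ≥0∞} (hf : ∑' k : s, f k = ⊤) (b : ℝ≥0∞) (hb : b ≠ ⊤) :
    ∃ Φ : Finset ι, (∀ k ∈ Φ, k ∈ s) ∧ b < ∑ k ∈ Φ, f k := by
  rw [ENNReal.tsum_eq_iSup_sum] at hf
  obtain ⟨t, ht⟩ := lt_iSup_iff.1 (hf ▸ hb.lt_top)
  refine ⟨t.map (Function.Embedding.subtype _), fun k hk => ?_, by rwa [sum_map]⟩
  obtain ⟨x, -, rfl⟩ := mem_map.1 hk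
  exact x.2

lemma card_window_shiftInter_le_card_pairs (A : Set ℕ) {a L L' : ℕ} {k : ℤ}
    (hk : L + k.natAbs ≤ L') :
    #(window (shiftInter A k.natAbs) a L) ≤
      #{p ∈ window A a L' ×ˢ window A a L' | (p.2 : ℤ) - p.1 = k} := by
  rcases le_or_gt 0 k with hk0 | hk0
  · refine card_le_card_of_injOn (fun n => (n, n + k.natAbs)) (fun n hn => ?_)
      (fun _ _ _ _ h => (Prod.ext_iff.1 h).1)
    simp only [mem_coe, mem_window, shiftInter, mem_filter, mem_product] at hn ⊢
    refine ⟨⟨⟨by omega, by omega, hn.2.2.1⟩, by omega, by omega, hn.2.2.2⟩, by omega⟩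
  · refine card_le_card_of_injOn (fun n => (n + k.natAbs, n)) (fun n hn => ?_)
      (fun _ _ _ _ h => (Prod.ext_iff.1 h).2)
    simp only [mem_coe, mem_window, shiftInter, mem_filter, mem_product] at hn ⊢
    refine ⟨⟨⟨by omega, by omega, hn.2.2.2⟩, by omega, by omega, hn.2.2.1⟩, by omega⟩

lemma sum_card_pairs_mul_le_sum_correlationSum {A : Set ℕ} (α : ℤ → ℝ) {T : Finset ℕ}
    (hT : ∀ n ∈ T, n ∈ A) (Φ : Finset ℤ) :
    ∑ k ∈ Φ, #{p ∈ T ×ˢ T | (p.2 : ℤ) - p.1 = k} * ENNReal.ofReal (α k) ≤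
      ∑ n ∈ T, correlationSum A α n := by
  set g : ℕ × ℕ → ℝ≥0∞ := fun p => ENNReal.ofReal (α (p.2 - p.1))
  calc ∑ k ∈ Φ, #{p ∈ T ×ˢ T | (p.2 : ℤ) - p.1 = k} * ENNReal.ofReal (α k)
      = ∑ k ∈ Φ, ∑ p ∈ T ×ˢ T with (p.2 : ℤ) - p.1 = k, g p := by
        refine sum_congr rfl fun k _ => ?_
        rw [sum_congr rfl fun p hp => show g p = ENNReal.ofReal (α k) by
          simp only [g, (mem_filter.1 hp).2], sum_const, nsmul_eq_mul]
    _ ≤ ∑ p ∈ T ×ˢ T, g p := by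
        rw [sum_fiberwise_eq_sum_filter]
        exact sum_le_sum_of_subset (filter_subset _ _)
    _ = ∑ n ∈ T, ∑ m ∈ T, ENNReal.ofReal (α (m - n)) := sum_product _ _ _
    _ ≤ ∑ n ∈ T, correlationSum A α n := by
        refine sum_le_sum fun n _ => ?_
        rw [correlationSum, _root_.tsum_subtype A (fun m : ℕ => ENNReal.ofReal (α (m - n)))]
        calc ∑ m ∈ T, ENNReal.ofReal (α (m - n))
            = ∑ m ∈ T, A.indicator (fun m : ℕ => ENNReal.ofReal (α (m - n))) m :=
              sum_congr rfl fun m hm =>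
                (Set.indicator_of_mem (hT m hm) (fun m : ℕ => ENNReal.ofReal (α (m - n)))).symm
          _ ≤ _ := ENNReal.sum_le_tsum T

theorem sum_ofReal_le_of_correlationSum_le {A : Set ℕ} {α : ℤ → ℝ} {κ : ℝ≥0∞}
    (hβ : ∀ n ∈ A, correlationSum A α n ≤ κ) {Φ : Finset ℤ} {c : ℝ} (hc : 0 < c) {a L : ℕ}
    (hL : 0 < L) (hΦL : ∀ k ∈ Φ, k.natAbs ≤ L)
    (hΦ : ∀ k ∈ Φ, c * L ≤ #(window (shiftInter A k.natAbs) a L)) :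
    ∑ k ∈ Φ, ENNReal.ofReal (α k) ≤ ENNReal.ofReal (2 / c) * κ := by
  set T := window A a (2 * L)
  have hcL : ENNReal.ofReal (c * L) ≠ 0 := by simp; positivity
  refine (ENNReal.mul_le_mul_iff_right hcL ENNReal.ofReal_ne_top).1 ?_
  calc ENNReal.ofReal (c * L) * ∑ k ∈ Φ, ENNReal.ofReal (α k)
      = ∑ k ∈ Φ, ENNReal.ofReal (c * L) * ENNReal.ofReal (α k) := mul_sum _ _ _
    _ ≤ ∑ k ∈ Φ, #{p ∈ T ×ˢ T | (p.2 : ℤ) - p.1 = k} * ENNReal.ofReal (α k) := by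
        refine sum_le_sum fun k hk => mul_le_mul_left ?_ _
        rw [← ENNReal.ofReal_natCast]
        refine ENNReal.ofReal_le_ofReal ((hΦ k hk).trans (Nat.cast_le.2 ?_))
        exact card_window_shiftInter_le_card_pairs A (by linarith [hΦL k hk])
    _ ≤ ∑ n ∈ T, correlationSum A α n :=
        sum_card_pairs_mul_le_sum_correlationSum α (fun n hn => (mem_window.1 hn).2.2) Φ
    _ ≤ #T * κ := by
        rw [← nsmul_eq_mul, ← sum_const]
        exact sum_le_sum fun n hn => hβ n (mem_window.1 hn).2.2
    _ ≤ (2 * L : ℕ) * κ := by gcongr; exact card_window_le A a (2 * L)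
    _ = ENNReal.ofReal (c * L) * (ENNReal.ofReal (2 / c) * κ) := by
        rw [← mul_assoc, ← ENNReal.ofReal_mul (by positivity), ← ENNReal.ofReal_natCast]
        congr 2
        field_simp
        push_cast
        ring

theorem beta_unbounded_general (A : Set ℕ) (hA : 0 < upperBanachDensity A)
    (α : ℤ → ℝ)
    (hdiv : (∑' n : ℤ, ENNReal.ofReal (α n)) = ⊤)
    (C : ℝ) (hC : 0 < C) (N : WithTop ℤ)
    (hgrow : ∀ n : ℤ, (n : WithTop ℤ) < N → C * α (n - 1) ≤ α n)
    (hzero : ∀ n : ℤ, N ≤ (n : WithTop ℤ) → α n = 0) :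
    ∀ K : ℝ, ∃ n ∈ A,
      ENNReal.ofReal K < ∑' m : A, ENNReal.ofReal (α ((m : ℕ) - (n : ℤ))) := by
  set γ := upperBanachDensity A / 2
  have hγ : 0 < γ := half_pos hA
  choose a L ha hL hdense using exists_lt_card_window (half_lt_self hA)
  set U := Ultrafilter.of (atTop : Filter ℕ)
  have haU : Tendsto a U atTop := (tendsto_atTop_mono ha tendsto_id).mono_left (Ultrafilter.of_le _)
  have hLU : Tendsto L U atTop := (tendsto_atTop_mono hL tendsto_id).mono_left (Ultrafilter.of_le _)
  have hF := isSyndetic_setOf_eventually_lt_card_window hγ haU hLU (Eventually.of_forall hdense)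
  have hdivF := tsum_ofReal_natAbs_mem_eq_top hdiv hC hgrow hzero hF
  intro K
  by_contra! hK
  obtain ⟨Φ, hΦF, hΦ⟩ := ENNReal.exists_finset_lt_sum_of_tsum_subtype_eq_top
    (f := fun k => ENNReal.ofReal (α k)) hdivF
    (ENNReal.ofReal (2 / (γ ^ 2 / 2)) * ENNReal.ofReal K) (by finiteness)
  obtain ⟨j, hjΦ, hjL⟩ := ((eventually_all_finset Φ).2 hΦF).and
    (hLU.eventually_ge_atTop (Φ.sup Int.natAbs + 1)) |>.exists
  exact hΦ.not_ge (sum_ofReal_le_of_correlationSum_le hK (by positivity) (by omega)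
    (fun k hk => (le_sup (f := Int.natAbs) hk).trans (by omega)) fun k hk => (hjΦ k hk).le)

/-- If `A` has positive upper Banach density and `(α_n)` is a non-negative,
geometrically controlled sequence with divergent total sum, then the correlation
sums `β_n = Σ_{m ∈ A} α_{m−n}` are unbounded over `n ∈ A`. -/
theorem beta_unbounded (A : Set ℕ) (hA : 0 < upperBanachDensity A)
    (α : ℤ → ℝ) (hnn : ∀ n, 0 ≤ α n)
    (hdiv : (∑' n : ℤ, ENNReal.ofReal (α n)) = ⊤)
    (C : ℝ) (hC : 0 < C) (N : WithTop ℤ)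
    (hgrow : ∀ n : ℤ, (n : WithTop ℤ) < N → C * α (n - 1) ≤ α n)
    (hzero : ∀ n : ℤ, N ≤ (n : WithTop ℤ) → α n = 0) :
    ∀ K : ℝ, ∃ n ∈ A,
      ENNReal.ofReal K < ∑' m : A, ENNReal.ofReal (α ((m : ℕ) - (n : ℤ))) :=
  beta_unbounded_general A hA α hdiv C hC N hgrow hzero
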